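/- Let Q be an N×N symmetric positive definite matrix whose smallest eigenvalue λ_min has a unit-norm eigenvector v all of whose components have magnitude 1/√N. Then for every diagonal matrix D with 0 ⪯ D ⪯ Q, the sum of the K smallest diagonal entries of D is at most K·λ_min, for each K = 1,…,N. -/

import Mathlib

open Matrix

/-- Sum of the `K` smallest elements of a finite sequence, as the infimum of sums over
subsets of cardinality `K`. -/
noncomputable def sumKSmallest {N : ℕ} (a : Fin N → ℝ) (K : ℕ) : ℝ :=
  sInf {s : ℝ | ∃ T : Finset (Fin N), T.card = K ∧ s = ∑ n ∈ T, a n}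

/-!
Testing `Q - diag d ⪰ 0` against the eigenvector `v` gives `∑ dₙ vₙ² ≤ λ_min`, and
since `vₙ² = 1/N` this says that the mean of the `dₙ` is at most `λ_min`. The `K` smallest
entries have mean at most the overall mean, whence the bound `K · λ_min`.
-/

section KSmallest

variable {ι : Type*} [Fintype ι] (a : ι → ℝ)

/-- A `K`-subset minimizing the sum cannot be improved by swapping one element. -/
theorem exists_card_eq_and_forall_mem_le_notMem {K : ℕ} (hK : K ≤ Fintype.card ι) :
    ∃ T : Finset ι, T.card = K ∧ ∀ i ∈ T, ∀ j ∉ T, a i ≤ a j := by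
  classical
  obtain ⟨T, hT, hmin⟩ := Finset.exists_min_image
    ((Finset.univ : Finset ι).powersetCard K) (fun T => ∑ n ∈ T, a n)
    (Finset.powersetCard_nonempty.mpr (by simpa using hK))
  rw [Finset.mem_powersetCard_univ] at hT
  refine ⟨T, hT, fun i hi j hj => ?_⟩
  have hj' : j ∉ T.erase i := fun h => hj (Finset.mem_of_mem_erase h)
  have hswap := hmin (insert j (T.erase i)) <| by
    rw [Finset.mem_powersetCard_univ, Finset.card_insert_of_notMem hj',
      Finset.card_erase_of_mem hi, hT]
    have : 0 < T.card := Finset.card_pos.mpr ⟨i, hi⟩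
    omega
  rw [Finset.sum_insert hj', Finset.sum_erase_eq_sub hi] at hswap
  linarith

theorem card_mul_sum_le_card_mul_sum_of_forall_mem_le_notMem {T : Finset ι}
    (hT : ∀ i ∈ T, ∀ j ∉ T, a i ≤ a j) :
    (Fintype.card ι : ℝ) * ∑ i ∈ T, a i ≤ T.card * ∑ i, a i := by
  classical
  have hcross : ∑ i ∈ T, ∑ j ∈ Tᶜ, a i ≤ ∑ i ∈ T, ∑ j ∈ Tᶜ, a j :=
    Finset.sum_le_sum fun i hi => Finset.sum_le_sum fun j hj =>
      hT i hi j (Finset.mem_compl.mp hj)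
  have hcard : (Tᶜ.card : ℝ) = Fintype.card ι - T.card := by
    rw [Finset.card_compl, Nat.cast_sub (Finset.card_le_univ T)]
  simp only [Finset.sum_const, nsmul_eq_mul, ← Finset.mul_sum, hcard] at hcross
  rw [← Finset.sum_add_sum_compl T]
  linarith

theorem exists_card_eq_and_sum_le_card_mul_mean {K : ℕ} (hK : K ≤ Fintype.card ι) :
    ∃ T : Finset ι, T.card = K ∧ ∑ i ∈ T, a i ≤ K * ((∑ i, a i) / Fintype.card ι) := by
  obtain ⟨T, hT, hle⟩ := exists_card_eq_and_forall_mem_le_notMem a hK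
  refine ⟨T, hT, ?_⟩
  rcases Nat.eq_zero_or_pos (Fintype.card ι) with hι | hι
  · have : T = ∅ := Finset.card_eq_zero.mp (by omega)
    simp [this, hι]
  · rw [mul_div_assoc', le_div_iff₀ (by exact_mod_cast hι), mul_comm, ← hT]
    exact card_mul_sum_le_card_mul_sum_of_forall_mem_le_notMem a hle

end KSmallest

theorem sumKSmallest_le_sum {N : ℕ} (a : Fin N → ℝ) {T : Finset (Fin N)} :
    sumKSmallest a T.card ≤ ∑ n ∈ T, a n := by
  refine csInf_le ?_ ⟨T, rfl, rfl⟩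
  refine ((Set.finite_range fun S : Finset (Fin N) => ∑ n ∈ S, a n).subset ?_).bddBelow
  rintro s ⟨S, -, rfl⟩
  exact ⟨S, rfl⟩

theorem sum_mul_sq_le_of_posSemidef_sub_diagonal {ι : Type*} [Fintype ι] [DecidableEq ι]
    {Q : Matrix ι ι ℝ} {d v : ι → ℝ} {μ : ℝ} (hdQ : (Q - diagonal d).PosSemidef)
    (hv : Q *ᵥ v = μ • v) :
    ∑ n, d n * v n ^ 2 ≤ μ * (v ⬝ᵥ v) := by
  have hgap := hdQ.dotProduct_mulVec_nonneg v
  rw [star_trivial, sub_mulVec, dotProduct_sub, hv, dotProduct_smul, smul_eq_mul] at hgap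
  have hdiag : v ⬝ᵥ diagonal d *ᵥ v = ∑ n, d n * v n ^ 2 :=
    Finset.sum_congr rfl fun n _ => by rw [mulVec_diagonal]; ring
  linarith

theorem sum_smallest_diag_le_of_equimagnitude_eigenvector_general {N : ℕ}
    (Q : Matrix (Fin N) (Fin N) ℝ)
    (lmin : ℝ) (v : Fin N → ℝ)
    (hv_eig : Q *ᵥ v = lmin • v)
    (hv_norm : v ⬝ᵥ v = 1)
    (hv_mag : ∀ n, |v n| = 1 / Real.sqrt N)
    (d : Fin N → ℝ)
    (hdQ : (Q - Matrix.diagonal d).PosSemidef)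
    (K : ℕ) (hKN : K ≤ N) :
    sumKSmallest d K ≤ K * lmin := by
  have hv_sq : ∀ n, v n ^ 2 = 1 / N := fun n => by
    rw [← sq_abs, hv_mag, div_pow, one_pow, Real.sq_sqrt (Nat.cast_nonneg N)]
  have hmean : (∑ n, d n) / N ≤ lmin := by
    have := sum_mul_sq_le_of_posSemidef_sub_diagonal hdQ hv_eig
    simp only [hv_sq, hv_norm, mul_one, mul_one_div] at this
    rwa [Finset.sum_div]
  obtain ⟨T, rfl, hT⟩ :=
    exists_card_eq_and_sum_le_card_mul_mean d (hKN.trans_eq (Fintype.card_fin N).symm)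
  rw [Fintype.card_fin] at hT
  calc sumKSmallest d T.card ≤ ∑ n ∈ T, d n := sumKSmallest_le_sum d
    _ ≤ T.card * ((∑ n, d n) / N) := hT
    _ ≤ T.card * lmin := by gcongr

/-- If the smallest eigenvalue `lmin` of a symmetric positive definite `Q` has
a unit-norm eigenvector all of whose components have magnitude `1/√N`, then for every
diagonal `D` with `0 ⪯ D ⪯ Q`, the sum of the `K` smallest diagonal entries of `D` is at
most `K·lmin`. -/
theorem sum_smallest_diag_le_of_equimagnitude_eigenvector {N : ℕ}
    (Q : Matrix (Fin N) (Fin N) ℝ) (hQ : Q.PosDef) (hQsymm : Q.IsSymm)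
    (lmin : ℝ) (v : Fin N → ℝ)
    (hv_eig : Q *ᵥ v = lmin • v)
    (hv_norm : v ⬝ᵥ v = 1)
    (hv_mag : ∀ n, |v n| = 1 / Real.sqrt N)
    (h_min : ∀ x : Fin N → ℝ, lmin * (x ⬝ᵥ x) ≤ x ⬝ᵥ Q *ᵥ x)
    (d : Fin N → ℝ)
    (hd_psd : (Matrix.diagonal d).PosSemidef)
    (hdQ : (Q - Matrix.diagonal d).PosSemidef)
    (K : ℕ) (hK1 : 1 ≤ K) (hKN : K ≤ N) :
    sumKSmallest d K ≤ K * lmin :=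
  sum_smallest_diag_le_of_equimagnitude_eigenvector_general Q lmin v hv_eig hv_norm hv_mag d hdQ K
    hKN
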